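/- (Upward closedness of the replacement region, the core of the control-limit proof.) For each t ∈ {0,1,…,T−1} and each k ∈ ℕ, the map x ↦ E_{(Z,K)}[Ṽ_{t+1}(x+Z, k+Z+K)] is non-decreasing in x ∈ ℕ; consequently, if preventive replacement is optimal at deterioration level x (i.e. c_p + E_{(Z,K)}[Ṽ_{t+1}(Z, k+Z+K)] ≤ E_{(Z,K)}[Ṽ_{t+1}(x+Z, k+Z+K)]) then it is optimal at every x' ≥ x. -/

import Mathlib

open Filter

/-- Negative Binomial pmf with real shape `r` and success probability `p`:
`NB(r,p)(z) = Γ(z+r)/(Γ(r)·z!)·p^r·(1−p)^z` for `r > 0`, and `NB(0,p)` is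
the point mass at `0`. -/
noncomputable def NB (r p : ℝ) (z : ℕ) : ℝ :=
  if r = 0 then (if z = 0 then (1 : ℝ) else 0)
  else Real.Gamma ((z : ℝ) + r) / (Real.Gamma r * (Nat.factorial z : ℝ)) * p ^ r * (1 - p) ^ z

/-- `p_t = (β0 + N·t)/(β0 + N·t + 1)`. -/
noncomputable def pt (β0 : ℝ) (N t : ℕ) : ℝ :=
  (β0 + (N : ℝ) * (t : ℝ)) / (β0 + (N : ℝ) * (t : ℝ) + 1)

/-- Expectation `E_{(Z,K)}[f(Z,K)]` with `Z ~ NB(α0+k, p_t)` and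
`K ~ NB((N−1)(α0+k), p_t)` independent. -/
noncomputable def EZK (α0 β0 : ℝ) (N t k : ℕ) (f : ℕ → ℕ → ℝ) : ℝ :=
  ∑' z : ℕ, ∑' κ : ℕ,
    NB (α0 + (k : ℝ)) (pt β0 N t) z * NB (((N : ℝ) - 1) * (α0 + (k : ℝ))) (pt β0 N t) κ * f z κ

/-! By backward induction on `t`, every `Ṽ_t` is bounded and non-decreasing in `x`: at `t = T`
because `c_u ≥ 0`; below `ξ` because the continuation expectation inherits monotonicity from
`Ṽ_{t+1}` termwise; across `ξ` because `c_p ≤ c_u`. Boundedness is what makes the expectations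
absolutely convergent series that may be compared termwise; it rests on a bound for the total
mass of `NB(r, p)` that is uniform in `r`, obtained by comparing `NB(r, p)` with `NB(⌈r⌉, p)`,
whose mass is `1` by the negative binomial series. -/

lemma NB_zero_right {r : ℝ} (hr : 0 < r) (p : ℝ) : NB r p 0 = p ^ r := by
  simp [NB, hr.ne', (Real.Gamma_pos_of_pos hr).ne']

lemma NB_succ {r : ℝ} (hr : 0 < r) (p : ℝ) (z : ℕ) :
    NB r p (z + 1) = (z + r) / (z + 1) * (1 - p) * NB r p z := by
  have hzr : (z : ℝ) + r ≠ 0 := by positivity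
  have hG : Real.Gamma r ≠ 0 := (Real.Gamma_pos_of_pos hr).ne'
  simp only [NB, hr.ne', if_false]
  rw [Nat.cast_succ, add_right_comm, Real.Gamma_add_one hzr, Nat.factorial_succ, Nat.cast_mul,
    pow_succ]
  field_simp
  push_cast
  ring

lemma NB_nonneg {r p : ℝ} (hr : 0 ≤ r) (hp : 0 ≤ p) (hp1 : p ≤ 1) (z : ℕ) : 0 ≤ NB r p z := by
  rcases hr.eq_or_lt with rfl | hr
  · unfold NB; split_ifs <;> norm_num
  · have := Real.Gamma_pos_of_pos hr
    have : 0 < Real.Gamma (z + r) := Real.Gamma_pos_of_pos (by positivity)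
    have : 0 ≤ 1 - p := by linarith
    rw [NB, if_neg hr.ne']
    positivity

lemma NB_natCast_succ (n : ℕ) (p : ℝ) (z : ℕ) :
    NB (n + 1 : ℕ) p z = p ^ (n + 1) * ((z + n).choose n * (1 - p) ^ z) := by
  rw [NB, if_neg (by positivity), Nat.cast_succ, ← add_assoc, ← Nat.cast_add,
    Real.Gamma_nat_eq_factorial, Real.Gamma_nat_eq_factorial, ← Nat.cast_succ,
    Real.rpow_natCast, ← Nat.choose_symm_add, Nat.cast_add_choose, pow_succ]
  ring

lemma NB_mul_rpow_le {r s p : ℝ} (hr : 0 < r) (hrs : r ≤ s) (hp : 0 ≤ p) (hp1 : p ≤ 1) (z : ℕ) :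
    p ^ s * NB r p z ≤ p ^ r * NB s p z := by
  induction z with
  | zero => rw [NB_zero_right hr, NB_zero_right (hr.trans_le hrs), mul_comm]
  | succ z ih =>
    have hq : 0 ≤ 1 - p := by linarith
    have hratio : (z + r) / (z + 1) * (1 - p) ≤ (z + s) / (z + 1) * (1 - p) := by
      gcongr
    rw [NB_succ hr, NB_succ (hr.trans_le hrs), mul_left_comm, mul_left_comm (p ^ r)]
    exact mul_le_mul hratio ih (mul_nonneg (by positivity) (NB_nonneg hr.le hp hp1 z))
      (mul_nonneg (div_nonneg (by linarith) (by positivity)) hq)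

lemma hasSum_NB_natCast (n : ℕ) {p : ℝ} (hp : 0 < p) (hp1 : p ≤ 1) : HasSum (NB n p) 1 := by
  cases n with
  | zero =>
    convert hasSum_ite_eq 0 (1 : ℝ) using 1
    ext z
    simp [NB]
  | succ n =>
    have hq : ‖1 - p‖ < 1 := by rw [Real.norm_eq_abs, abs_lt]; constructor <;> linarith
    have h := (hasSum_choose_mul_geometric_of_norm_lt_one n hq).mul_left (p ^ (n + 1))
    rw [sub_sub_cancel, one_div, mul_inv_cancel₀ (by positivity)] at h
    rwa [funext (NB_natCast_succ n p)]

lemma NB_le_rpow_mul_NB_natCeil {r p : ℝ} (hr : 0 ≤ r) (hp : 0 < p) (hp1 : p ≤ 1) (z : ℕ) :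
    NB r p z ≤ p ^ (r - ⌈r⌉₊) * NB ⌈r⌉₊ p z := by
  rcases hr.eq_or_lt with rfl | hr
  · simp
  have h := NB_mul_rpow_le hr (Nat.le_ceil r) hp.le hp1 z
  rw [Real.rpow_sub hp, div_mul_eq_mul_div, le_div_iff₀ (by positivity), mul_comm]
  exact h

lemma summable_NB {r p : ℝ} (hr : 0 ≤ r) (hp : 0 < p) (hp1 : p ≤ 1) : Summable (NB r p) :=
  .of_nonneg_of_le (NB_nonneg hr hp.le hp1) (NB_le_rpow_mul_NB_natCeil hr hp hp1)
    ((hasSum_NB_natCast _ hp hp1).summable.mul_left _)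

lemma tsum_NB_le_inv {r p : ℝ} (hr : 0 ≤ r) (hp : 0 < p) (hp1 : p ≤ 1) :
    ∑' z, NB r p z ≤ p⁻¹ := by
  have h := ((hasSum_NB_natCast ⌈r⌉₊ hp hp1).mul_left (p ^ (r - ⌈r⌉₊))).summable
  calc ∑' z, NB r p z ≤ ∑' z, p ^ (r - ⌈r⌉₊) * NB ⌈r⌉₊ p z :=
        (summable_NB hr hp hp1).tsum_le_tsum (NB_le_rpow_mul_NB_natCeil hr hp hp1) h
    _ = p ^ (r - ⌈r⌉₊) := by rw [tsum_mul_left, (hasSum_NB_natCast _ hp hp1).tsum_eq, mul_one]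
    _ ≤ p ^ (-1 : ℝ) :=
        Real.rpow_le_rpow_of_exponent_ge hp hp1 (by linarith [Nat.ceil_lt_add_one hr])
    _ = p⁻¹ := Real.rpow_neg_one p

section WeightedSum

variable {ι : Type*} {w f g : ι → ℝ} {C : ℝ}

lemma norm_mul_le_mul_of_abs_le (hw0 : 0 ≤ w) (hf : ∀ i, |f i| ≤ C) (i : ι) :
    ‖w i * f i‖ ≤ w i * C := by
  rw [Real.norm_eq_abs, abs_mul, abs_of_nonneg (hw0 i)]
  exact mul_le_mul_of_nonneg_left (hf i) (hw0 i)

lemma summable_mul_of_abs_le (hw : Summable w) (hw0 : 0 ≤ w) (hf : ∀ i, |f i| ≤ C) :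
    Summable fun i ↦ w i * f i :=
  (hw.mul_right C).of_norm_bounded (norm_mul_le_mul_of_abs_le hw0 hf)

lemma abs_tsum_mul_le (hw : Summable w) (hw0 : 0 ≤ w) (hf : ∀ i, |f i| ≤ C) :
    |∑' i, w i * f i| ≤ (∑' i, w i) * C :=
  tsum_of_norm_bounded (hw.hasSum.mul_right C) (norm_mul_le_mul_of_abs_le hw0 hf)

lemma tsum_mul_le_tsum_mul (hw : Summable w) (hw0 : 0 ≤ w) (hf : ∀ i, |f i| ≤ C)
    (hg : ∀ i, |g i| ≤ C) (hfg : ∀ i, f i ≤ g i) :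
    ∑' i, w i * f i ≤ ∑' i, w i * g i :=
  (summable_mul_of_abs_le hw hw0 hf).tsum_le_tsum
    (fun i ↦ mul_le_mul_of_nonneg_left (hfg i) (hw0 i)) (summable_mul_of_abs_le hw hw0 hg)

end WeightedSum

lemma pt_pos {β0 : ℝ} (hβ0 : 0 < β0) (N t : ℕ) : 0 < pt β0 N t := by
  unfold pt; positivity

lemma pt_le_one {β0 : ℝ} (hβ0 : 0 < β0) (N t : ℕ) : pt β0 N t ≤ 1 := by
  unfold pt
  rw [div_le_one (by positivity)]
  linarith

section Expectation

variable {α0 β0 : ℝ} {N t k : ℕ} {f g : ℕ → ℕ → ℝ} {C : ℝ}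

lemma EZK_eq_tsum_mul_tsum (f : ℕ → ℕ → ℝ) :
    EZK α0 β0 N t k f = ∑' z, NB (α0 + k) (pt β0 N t) z *
      ∑' κ, NB ((N - 1) * (α0 + k)) (pt β0 N t) κ * f z κ := by
  simp_rw [EZK, mul_assoc, tsum_mul_left]

lemma abs_EZK_le (hα0 : 0 ≤ α0) (hβ0 : 0 < β0) (hN : 1 ≤ N) (hf : ∀ z κ, |f z κ| ≤ C) :
    |EZK α0 β0 N t k f| ≤ (pt β0 N t)⁻¹ * ((pt β0 N t)⁻¹ * C) := by
  have hp := pt_pos hβ0 N t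
  have hp1 := pt_le_one hβ0 N t
  have hC : 0 ≤ C := (abs_nonneg _).trans (hf 0 0)
  have hr : (0 : ℝ) ≤ α0 + k := by positivity
  have hs : 0 ≤ ((N : ℝ) - 1) * (α0 + k) := mul_nonneg (by simpa using hN) (by positivity)
  have hinner : ∀ z, |∑' κ, NB ((N - 1) * (α0 + k)) (pt β0 N t) κ * f z κ| ≤ (pt β0 N t)⁻¹ * C :=
    fun z ↦ (abs_tsum_mul_le (summable_NB hs hp hp1) (NB_nonneg hs hp.le hp1) (hf z)).trans
      (mul_le_mul_of_nonneg_right (tsum_NB_le_inv hs hp hp1) hC)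
  rw [EZK_eq_tsum_mul_tsum]
  exact (abs_tsum_mul_le (summable_NB hr hp hp1) (NB_nonneg hr hp.le hp1) hinner).trans
    (mul_le_mul_of_nonneg_right (tsum_NB_le_inv hr hp hp1) (by positivity))

lemma EZK_mono (hα0 : 0 ≤ α0) (hβ0 : 0 < β0) (hN : 1 ≤ N) (hf : ∀ z κ, |f z κ| ≤ C)
    (hg : ∀ z κ, |g z κ| ≤ C) (hfg : ∀ z κ, f z κ ≤ g z κ) :
    EZK α0 β0 N t k f ≤ EZK α0 β0 N t k g := by
  have hp := pt_pos hβ0 N t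
  have hp1 := pt_le_one hβ0 N t
  have hr : (0 : ℝ) ≤ α0 + k := by positivity
  have hs : 0 ≤ ((N : ℝ) - 1) * (α0 + k) := mul_nonneg (by simpa using hN) (by positivity)
  have hv := summable_NB hs hp hp1
  have hv0 := NB_nonneg hs hp.le hp1
  rw [EZK_eq_tsum_mul_tsum, EZK_eq_tsum_mul_tsum]
  exact tsum_mul_le_tsum_mul (summable_NB hr hp hp1) (NB_nonneg hr hp.le hp1)
    (fun z ↦ abs_tsum_mul_le hv hv0 (hf z)) (fun z ↦ abs_tsum_mul_le hv hv0 (hg z))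
    (fun z ↦ tsum_mul_le_tsum_mul hv hv0 (hf z) (hg z) (hfg z))

lemma EZK_shift_monotone (hα0 : 0 ≤ α0) (hβ0 : 0 < β0) (hN : 1 ≤ N) {W : ℕ → ℕ → ℝ}
    (hW : ∀ x k, |W x k| ≤ C) (hWmono : ∀ k, Monotone (W · k)) :
    Monotone fun x ↦ EZK α0 β0 N t k fun z κ ↦ W (x + z) (k + z + κ) :=
  fun _ _ hxx' ↦ EZK_mono hα0 hβ0 hN (fun _ _ ↦ hW _ _) (fun _ _ ↦ hW _ _)
    (fun _ _ ↦ hWmono _ (Nat.add_le_add_right hxx' _))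

end Expectation

structure IsValueFunction (α0 β0 : ℝ) (N T ξ : ℕ) (cp cu : ℝ) (V : ℕ → ℕ → ℕ → ℝ) : Prop where
  terminal : ∀ x k, V T x k = if ξ ≤ x then cu else 0
  failed : ∀ t < T, ∀ x k, ξ ≤ x →
    V t x k = cu + EZK α0 β0 N t k (fun z κ => V (t + 1) z (k + z + κ))
  working : ∀ t < T, ∀ x k, x < ξ →
    V t x k = min (cp + EZK α0 β0 N t k (fun z κ => V (t + 1) z (k + z + κ)))
      (EZK α0 β0 N t k (fun z κ => V (t + 1) (x + z) (k + z + κ)))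

namespace IsValueFunction

variable {α0 β0 : ℝ} {N T ξ : ℕ} {cp cu : ℝ} {V : ℕ → ℕ → ℕ → ℝ}

theorem bounded (hV : IsValueFunction α0 β0 N T ξ cp cu V) (hα0 : 0 ≤ α0) (hβ0 : 0 < β0)
    (hN : 1 ≤ N) {t : ℕ} (ht : t ≤ T) : ∃ C, ∀ x k, |V t x k| ≤ C := by
  induction ht using Nat.decreasingInduction with
  | self =>
    refine ⟨|cu|, fun x k ↦ ?_⟩
    rw [hV.terminal]
    split_ifs <;> simp
  | of_succ t htT ih =>
    obtain ⟨C, hC⟩ := ih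
    set B := (pt β0 N t)⁻¹ * ((pt β0 N t)⁻¹ * C)
    refine ⟨|cu| + |cp| + B, fun x k ↦ ?_⟩
    have hrenew : |EZK α0 β0 N t k fun z κ ↦ V (t + 1) z (k + z + κ)| ≤ B :=
      abs_EZK_le hα0 hβ0 hN fun _ _ ↦ hC _ _
    by_cases hx : ξ ≤ x
    · rw [hV.failed t htT x k hx]
      linarith [abs_add_le cu (EZK α0 β0 N t k fun z κ ↦ V (t + 1) z (k + z + κ)), abs_nonneg cp]
    · have hkeep : |EZK α0 β0 N t k fun z κ ↦ V (t + 1) (x + z) (k + z + κ)| ≤ B :=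
        abs_EZK_le hα0 hβ0 hN fun _ _ ↦ hC _ _
      rw [hV.working t htT x k (not_le.mp hx)]
      refine abs_min_le_max_abs_abs.trans (max_le ?_ (by linarith [abs_nonneg cu, abs_nonneg cp]))
      linarith [abs_add_le cp (EZK α0 β0 N t k fun z κ ↦ V (t + 1) z (k + z + κ)), abs_nonneg cu]

theorem monotone (hV : IsValueFunction α0 β0 N T ξ cp cu V) (hα0 : 0 ≤ α0) (hβ0 : 0 < β0)
    (hN : 1 ≤ N) (hcu : 0 ≤ cu) (hcpcu : cp ≤ cu) {t : ℕ} (ht : t ≤ T) (k : ℕ) :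
    Monotone (V t · k) := by
  induction ht using Nat.decreasingInduction generalizing k with
  | self =>
    intro x x' hxx'
    simp only [hV.terminal]
    split_ifs <;> first | rfl | assumption | omega
  | of_succ t htT ih =>
    intro x x' hxx'
    show V t x k ≤ V t x' k
    obtain ⟨C, hC⟩ := hV.bounded hα0 hβ0 hN htT
    by_cases hx' : x' < ξ
    · rw [hV.working t htT x k (hxx'.trans_lt hx'), hV.working t htT x' k hx']
      exact min_le_min le_rfl (EZK_shift_monotone hα0 hβ0 hN hC ih hxx')
    · rw [hV.failed t htT x' k (not_lt.mp hx')]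
      by_cases hx : ξ ≤ x
      · rw [hV.failed t htT x k hx]
      · rw [hV.working t htT x k (not_le.mp hx)]
        exact (min_le_left _ _).trans (by linarith)

end IsValueFunction

theorem replacement_region_upward_closed_general
    (α0 β0 : ℝ) (hα0 : 0 < α0) (hβ0 : 0 < β0)
    (N T : ℕ) (hN : 1 ≤ N)
    (ξ : ℕ)
    (cp cu : ℝ) (hcp : 0 < cp) (hcpcu : cp < cu)
    (V : ℕ → ℕ → ℕ → ℝ)
    (hVT : ∀ x k, V T x k = if ξ ≤ x then cu else 0)
    (hVfail : ∀ t, t < T → ∀ x k, ξ ≤ x →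
      V t x k = cu + EZK α0 β0 N t k (fun z κ => V (t + 1) z (k + z + κ)))
    (hVop : ∀ t, t < T → ∀ x k, x < ξ →
      V t x k =
        min (cp + EZK α0 β0 N t k (fun z κ => V (t + 1) z (k + z + κ)))
          (EZK α0 β0 N t k (fun z κ => V (t + 1) (x + z) (k + z + κ)))) :
    ∀ t, t < T → ∀ k : ℕ,
      (Monotone (fun x : ℕ =>
        EZK α0 β0 N t k (fun z κ => V (t + 1) (x + z) (k + z + κ)))) ∧
      (∀ x x' : ℕ, x ≤ x' →
        cp + EZK α0 β0 N t k (fun z κ => V (t + 1) z (k + z + κ)) ≤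
          EZK α0 β0 N t k (fun z κ => V (t + 1) (x + z) (k + z + κ)) →
        cp + EZK α0 β0 N t k (fun z κ => V (t + 1) z (k + z + κ)) ≤
          EZK α0 β0 N t k (fun z κ => V (t + 1) (x' + z) (k + z + κ))) := by
  intro t ht k
  have hV : IsValueFunction α0 β0 N T ξ cp cu V := ⟨hVT, hVfail, hVop⟩
  obtain ⟨C, hC⟩ := hV.bounded hα0.le hβ0 hN ht
  have hmono := EZK_shift_monotone (t := t) (k := k) hα0.le hβ0 hN hC
    (hV.monotone hα0.le hβ0 hN (hcp.trans hcpcu).le hcpcu.le ht)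
  exact ⟨hmono, fun x x' hxx' h ↦ h.trans (hmono hxx')⟩

/-- The continuation value `x ↦ E_{(Z,K)}[Ṽ_{t+1}(x+Z, k+Z+K)]` is non-decreasing
in `x`; hence if preventive replacement is optimal at `x`, it is optimal at every
`x' ≥ x`. -/
theorem replacement_region_upward_closed
    (α0 β0 : ℝ) (hα0 : 0 < α0) (hβ0 : 0 < β0)
    (N T : ℕ) (hN : 1 ≤ N) (hT : 1 ≤ T)
    (ξ : ℕ) (hξ : 1 ≤ ξ)
    (cp cu : ℝ) (hcp : 0 < cp) (hcpcu : cp < cu)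
    (V : ℕ → ℕ → ℕ → ℝ)
    (hVT : ∀ x k, V T x k = if ξ ≤ x then cu else 0)
    (hVfail : ∀ t, t < T → ∀ x k, ξ ≤ x →
      V t x k = cu + EZK α0 β0 N t k (fun z κ => V (t + 1) z (k + z + κ)))
    (hVop : ∀ t, t < T → ∀ x k, x < ξ →
      V t x k =
        min (cp + EZK α0 β0 N t k (fun z κ => V (t + 1) z (k + z + κ)))
          (EZK α0 β0 N t k (fun z κ => V (t + 1) (x + z) (k + z + κ)))) :
    ∀ t, t < T → ∀ k : ℕ,
      (Monotone (fun x : ℕ =>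
        EZK α0 β0 N t k (fun z κ => V (t + 1) (x + z) (k + z + κ)))) ∧
      (∀ x x' : ℕ, x ≤ x' →
        cp + EZK α0 β0 N t k (fun z κ => V (t + 1) z (k + z + κ)) ≤
          EZK α0 β0 N t k (fun z κ => V (t + 1) (x + z) (k + z + κ)) →
        cp + EZK α0 β0 N t k (fun z κ => V (t + 1) z (k + z + κ)) ≤
          EZK α0 β0 N t k (fun z κ => V (t + 1) (x' + z) (k + z + κ))) :=
  replacement_region_upward_closed_general α0 β0 hα0 hβ0 N T hN ξ cp cu hcp hcpcu V hVT hVfail hVop
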